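/- Let A, B be positive definite n×n matrices and Z ∈ M_n(ℂ). Then for all s, t ∈ ℝ, λ₁(|A^{(s+t)/2} Z B^{(s+t)/2}|) ≤ λ₁(|A^t Z B^t|)^{1/2} · λ₁(|A^s Z B^s|)^{1/2}, i.e., t ↦ log λ₁(|A^t Z B^t|) is midpoint convex (hence convex by continuity). -/

import Mathlib

/-!
Write `λ₁(|X|)` as the operator norm `‖X‖`. For `X = A^{(s+t)/2} Z B^{(s+t)/2}` the C⋆-identity
gives `‖X‖² = ρ(X⋆X)`, and since `ρ(xy) = ρ(yx)` the factors of `X⋆X` can be cycled and regrouped,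
using `A^{(s+t)/2} A^{(s+t)/2} = A^s A^t` and `B^{(s+t)/2} B^{(s+t)/2} = B^t B^s`, into
`ρ((A^t Z B^t) (A^s Z B^s)⋆) ≤ ‖A^t Z B^t‖ ‖A^s Z B^s‖`.
-/

open Matrix ComplexOrder

/-- The absolute value `|M| = (Mᴴ M)^{1/2}` of a complex matrix. -/
noncomputable def matAbs {n : ℕ} (M : Matrix (Fin n) (Fin n) ℂ) : Matrix (Fin n) (Fin n) ℂ :=
  (Matrix.posSemidef_conjTranspose_mul_self M).1.eigenvectorUnitary.1 *
    Matrix.diagonal ((↑) ∘ (√·) ∘ (Matrix.posSemidef_conjTranspose_mul_self M).1.eigenvalues) *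
    (star (Matrix.posSemidef_conjTranspose_mul_self M).1.eigenvectorUnitary : Matrix (Fin n) (Fin n) ℂ)

theorem matAbs_posSemidef {n : ℕ} (M : Matrix (Fin n) (Fin n) ℂ) : (matAbs M).PosSemidef :=
  by
    unfold matAbs
    rw [Matrix.star_eq_conjTranspose]
    refine Matrix.PosSemidef.mul_mul_conjTranspose_same (Matrix.PosSemidef.diagonal ?_) _
    intro i
    simp

/-- Eigenvalues of a Hermitian matrix arranged in decreasing order:
`eigDesc hM j` is the `j`-th largest eigenvalue. -/
noncomputable def eigDesc {n : ℕ} {M : Matrix (Fin n) (Fin n) ℂ} (hM : M.IsHermitian) :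
    Fin n → ℝ :=
  fun i => hM.eigenvalues (Tuple.sort hM.eigenvalues i.rev)

/-- Eigenvalues of a Hermitian matrix arranged in increasing order. -/
noncomputable def eigAsc {n : ℕ} {M : Matrix (Fin n) (Fin n) ℂ} (hM : M.IsHermitian) :
    Fin n → ℝ :=
  fun i => hM.eigenvalues (Tuple.sort hM.eigenvalues i)

/-- The largest eigenvalue of a Hermitian matrix. -/
noncomputable def maxEig {n : ℕ} {M : Matrix (Fin n) (Fin n) ℂ} (hM : M.IsHermitian) : ℝ :=
  ⨆ i, hM.eigenvalues i

/-- Real power `M^t` of a Hermitian matrix, via the spectral decomposition. -/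
noncomputable def rpowH {n : ℕ} {M : Matrix (Fin n) (Fin n) ℂ} (hM : M.IsHermitian) (t : ℝ) :
    Matrix (Fin n) (Fin n) ℂ :=
  (hM.eigenvectorUnitary : Matrix (Fin n) (Fin n) ℂ) *
    Matrix.diagonal (fun i => ((hM.eigenvalues i ^ t : ℝ) : ℂ)) *
    star (hM.eigenvectorUnitary : Matrix (Fin n) (Fin n) ℂ)

theorem rpowH_isHermitian {n : ℕ} {M : Matrix (Fin n) (Fin n) ℂ} (hM : M.IsHermitian) (t : ℝ) :
    (rpowH hM t).IsHermitian := by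
  unfold rpowH
  unfold Matrix.IsHermitian
  simp [Matrix.conjTranspose_mul, Matrix.diagonal_conjTranspose, mul_assoc,
    Matrix.star_eq_conjTranspose]
  congr 2
  funext i
  simp [star]
  rfl

/-- The ℓ²→ℓ² operator norm of a complex matrix. -/
noncomputable def opN {n : ℕ} (M : Matrix (Fin n) (Fin n) ℂ) : ℝ :=
  ‖Matrix.toEuclideanCLM (𝕜 := ℂ) M‖

open scoped Matrix.Norms.L2Operator ENNReal

theorem spectrum.spectralRadius_mul_comm {𝕜 A : Type*} [NormedField 𝕜] [Ring A] [Algebra 𝕜 A]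
    (a b : A) : spectralRadius 𝕜 (a * b) = spectralRadius 𝕜 (b * a) := by
  suffices h : ∀ x y : A, spectralRadius 𝕜 (x * y) ≤ spectralRadius 𝕜 (y * x) from
    le_antisymm (h a b) (h b a)
  intro x y
  refine iSup₂_le fun k hk => ?_
  rcases eq_or_ne k 0 with rfl | hk0
  · simp
  · have hk' : k ∈ spectrum 𝕜 (y * x) \ {0} :=
      spectrum.nonzero_mul_comm (𝕜 := 𝕜) x y ▸ ⟨hk, hk0⟩
    exact le_iSup₂ (f := fun k (_ : k ∈ spectrum 𝕜 (y * x)) => (‖k‖₊ : ℝ≥0∞)) k hk'.1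

theorem CStarAlgebra.norm_mul_mul_sq_le {A : Type*} [CStarAlgebra A] {a b a₁ b₁ c d z : A}
    (ha : star a * a = star c * a₁) (hb : b * star b = b₁ * star d) :
    ‖a * z * b‖ ^ 2 ≤ ‖a₁ * z * b₁‖ * ‖c * z * d‖ := by
  obtain h | h := subsingleton_or_nontrivial A
  · simp [Subsingleton.elim z 0]
  have hcycle : spectralRadius ℂ (star (a * z * b) * (a * z * b)) =
      spectralRadius ℂ (a₁ * z * b₁ * star (c * z * d)) := calc
    _ = spectralRadius ℂ (star b * (star z * (star a * a) * z * b)) := by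
      simp only [star_mul, mul_assoc]
    _ = spectralRadius ℂ ((star z * star c) * (a₁ * z * (b * star b))) := by
      rw [spectrum.spectralRadius_mul_comm (𝕜 := ℂ), ha]; simp only [mul_assoc]
    _ = _ := by
      rw [spectrum.spectralRadius_mul_comm (𝕜 := ℂ), hb]; simp only [star_mul, mul_assoc]
  calc ‖a * z * b‖ ^ 2 = (spectralRadius ℂ (a₁ * z * b₁ * star (c * z * d))).toReal := by
        rw [← hcycle, CStarAlgebra.toReal_spectralRadius_star_mul_self_eq_norm_sq]
    _ ≤ ‖a₁ * z * b₁ * star (c * z * d)‖ :=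
        ENNReal.toReal_le_of_le_ofReal (norm_nonneg _)
          ((spectrum.spectralRadius_le_nnnorm _).trans_eq (ofReal_norm _).symm)
    _ ≤ ‖a₁ * z * b₁‖ * ‖c * z * d‖ := (norm_mul_le _ _).trans_eq (by rw [norm_star])

theorem rpowH_eq_conj {n : ℕ} {M : Matrix (Fin n) (Fin n) ℂ} (hM : M.IsHermitian) (t : ℝ) :
    rpowH hM t = Unitary.conjStarAlgAut ℂ _ hM.eigenvectorUnitary
      (diagonal fun i => ((hM.eigenvalues i ^ t : ℝ) : ℂ)) := rfl

theorem rpowH_mul_rpowH {n : ℕ} {A : Matrix (Fin n) (Fin n) ℂ} (hA : A.PosDef) (s t : ℝ) :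
    rpowH hA.1 s * rpowH hA.1 t = rpowH hA.1 (s + t) := by
  simp only [rpowH_eq_conj, ← map_mul, diagonal_mul_diagonal, ← Complex.ofReal_mul,
    ← Real.rpow_add (hA.eigenvalues_pos _)]

theorem matAbs_eq_conj {n : ℕ} (M : Matrix (Fin n) (Fin n) ℂ) :
    matAbs M =
      Unitary.conjStarAlgAut ℂ _ (posSemidef_conjTranspose_mul_self M).1.eigenvectorUnitary
      (diagonal ((↑) ∘ (√·) ∘ (posSemidef_conjTranspose_mul_self M).1.eigenvalues)) := rfl

theorem matAbs_mul_self {n : ℕ} (M : Matrix (Fin n) (Fin n) ℂ) : matAbs M * matAbs M = Mᴴ * M := by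
  have hM := posSemidef_conjTranspose_mul_self M
  conv_rhs => rw [hM.1.spectral_theorem]
  rw [matAbs_eq_conj, ← map_mul, diagonal_mul_diagonal]
  congr 2
  funext i
  simp [← Complex.ofReal_mul, Real.mul_self_sqrt (hM.eigenvalues_nonneg i)]

theorem norm_matAbs {n : ℕ} (M : Matrix (Fin n) (Fin n) ℂ) : ‖matAbs M‖ = ‖M‖ := by
  have h := CStarRing.norm_star_mul_self (x := matAbs M)
  rw [(matAbs_posSemidef M).1.star_eq, matAbs_mul_self, ← star_eq_conjTranspose,
    CStarRing.norm_star_mul_self] at h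
  exact (mul_self_inj_of_nonneg (norm_nonneg _) (norm_nonneg _)).mp h.symm

open scoped MatrixOrder in
theorem maxEig_eq_norm {n : ℕ} {P : Matrix (Fin n) (Fin n) ℂ} (hP : P.PosSemidef) :
    maxEig hP.1 = ‖P‖ := by
  rcases isEmpty_or_nonempty (Fin n) with _ | _
  · simp [maxEig, Subsingleton.elim P 0]
  refine le_antisymm (Real.iSup_le (fun i => ?_) (norm_nonneg _)) ?_
  · exact (Real.le_norm_self _).trans
      (spectrum.norm_le_norm_of_mem (hP.1.eigenvalues_mem_spectrum_real i))
  · obtain ⟨j, hj⟩ := hP.1.spectrum_real_eq_range_eigenvalues ▸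
      CStarAlgebra.norm_mem_spectrum_of_nonneg hP.nonneg
    exact hj ▸ le_ciSup (Set.finite_range _).bddAbove j

theorem maxEig_matAbs {n : ℕ} (M : Matrix (Fin n) (Fin n) ℂ) :
    maxEig (matAbs_posSemidef M).1 = ‖M‖ :=
  (maxEig_eq_norm (matAbs_posSemidef M)).trans (norm_matAbs M)

theorem stmt_16 {n : ℕ} (A B Z : Matrix (Fin n) (Fin n) ℂ)
    (hA : A.PosDef) (hB : B.PosDef) :
    ∀ s t : ℝ,
      maxEig (matAbs_posSemidef
          (rpowH hA.1 ((s + t) / 2) * Z * rpowH hB.1 ((s + t) / 2))).1 ≤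
        maxEig (matAbs_posSemidef (rpowH hA.1 t * Z * rpowH hB.1 t)).1 ^ (1 / 2 : ℝ) *
          maxEig (matAbs_posSemidef (rpowH hA.1 s * Z * rpowH hB.1 s)).1 ^ (1 / 2 : ℝ) := by
  intro s t
  have hsq := CStarAlgebra.norm_mul_mul_sq_le (z := Z)
    (a := rpowH hA.1 ((s + t) / 2)) (a₁ := rpowH hA.1 t) (c := rpowH hA.1 s)
    (b := rpowH hB.1 ((s + t) / 2)) (b₁ := rpowH hB.1 t) (d := rpowH hB.1 s)
    (by rw [(rpowH_isHermitian _ _).star_eq, (rpowH_isHermitian _ _).star_eq,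
      rpowH_mul_rpowH hA, rpowH_mul_rpowH hA, add_halves])
    (by rw [(rpowH_isHermitian _ _).star_eq, (rpowH_isHermitian _ _).star_eq,
      rpowH_mul_rpowH hB, rpowH_mul_rpowH hB, add_halves, add_comm])
  rw [maxEig_matAbs, maxEig_matAbs, maxEig_matAbs, ← Real.sqrt_eq_rpow, ← Real.sqrt_eq_rpow,
    ← Real.sqrt_mul (norm_nonneg _)]
  exact Real.le_sqrt_of_sq_le hsq
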